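/- Let σ = σ′ > 0 and suppose the noiseless model fits the data point exactly: y = θᵀx (so c = 0). With a = σ‖x‖₂ and b = σ‖x′‖₂ where x′ zeroes coordinate m, one has a² − b² = σ² x_m², and hence E[(y − θ̃′ᵀx)²] ≤ E[(y − θ̃ᵀx)²] if and only if |θ_m| ≤ σ. -/

import Mathlib

open MeasureTheory ProbabilityTheory Real Filter Set
open scoped NNReal ENNReal

lemma aux_integrable_sq_exp {b : ℝ} (hb : 0 < b) :
    Integrable (fun x : ℝ => x ^ 2 * Real.exp (-b * x ^ 2)) := by
  have := integrable_rpow_mul_exp_neg_mul_sq hb (s := 2) (by norm_num)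
  simpa [Real.rpow_two] using this

lemma aux_tendsto_mul_exp {b : ℝ} (hb : 0 < b) :
    Tendsto (fun x : ℝ => x * Real.exp (-b * x ^ 2)) (Filter.cocompact ℝ) (nhds 0) := by
  have h := tendsto_rpow_abs_mul_exp_neg_mul_sq_cocompact hb 1
  apply squeeze_zero_norm _ h
  intro x
  rw [Real.norm_eq_abs, abs_mul, Real.abs_exp, Real.rpow_one]

lemma integral_sq_mul_exp_neg_mul_sq {b : ℝ} (hb : 0 < b) :
    ∫ x : ℝ, x ^ 2 * Real.exp (-b * x ^ 2) = Real.sqrt (π / b) / (2 * b) := by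
  set F : ℝ → ℝ := fun x => -(2 * b)⁻¹ * (x * Real.exp (-b * x ^ 2)) with hF
  set g : ℝ → ℝ := fun x => x ^ 2 * Real.exp (-b * x ^ 2)
      - (2 * b)⁻¹ * Real.exp (-b * x ^ 2) with hg
  have hderiv : ∀ x : ℝ, HasDerivAt F (g x) x := by
    intro x
    have h1 : HasDerivAt (fun x : ℝ => -b * x ^ 2) (-b * (2 * x)) x := by
      simpa using ((hasDerivAt_pow 2 x).const_mul (-b))
    have h2 : HasDerivAt (fun x : ℝ => Real.exp (-b * x ^ 2))
        (Real.exp (-b * x ^ 2) * (-b * (2 * x))) x := h1.exp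
    have h3 : HasDerivAt (fun x : ℝ => x * Real.exp (-b * x ^ 2))
        (1 * Real.exp (-b * x ^ 2) + x * (Real.exp (-b * x ^ 2) * (-b * (2 * x)))) x :=
      (hasDerivAt_id x).mul h2
    have h4 := h3.const_mul (-(2 * b)⁻¹)
    convert h4 using 1
    · rfl
    · rfl
    have hb0 : b ≠ 0 := hb.ne'
    simp only [g]
    field_simp
    ring
  have hgint : Integrable g :=
    (aux_integrable_sq_exp hb).sub ((integrable_exp_neg_mul_sq hb).const_mul _)
  have htop : Tendsto F atTop (nhds 0) := by
    have := (aux_tendsto_mul_exp hb).const_mul (-(2 * b)⁻¹)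
    rw [mul_zero] at this
    exact this.mono_left atTop_le_cocompact
  have hbot : Tendsto F atBot (nhds 0) := by
    have := (aux_tendsto_mul_exp hb).const_mul (-(2 * b)⁻¹)
    rw [mul_zero] at this
    exact this.mono_left atBot_le_cocompact
  have hIoi : ∫ x in Ioi (0:ℝ), g x = 0 - F 0 := by
    exact integral_Ioi_of_hasDerivAt_of_tendsto (hderiv 0).continuousAt.continuousWithinAt
      (fun x _ => hderiv x) hgint.integrableOn htop
  have hIic : ∫ x in Iic (0:ℝ), g x = F 0 - 0 := by
    exact integral_Iic_of_hasDerivAt_of_tendsto (hderiv 0).continuousAt.continuousWithinAt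
      (fun x _ => hderiv x) hgint.integrableOn hbot
  have hgzero : ∫ x : ℝ, g x = 0 := by
    rw [← intervalIntegral.integral_Iic_add_Ioi hgint.integrableOn hgint.integrableOn, hIoi, hIic]
    ring
  rw [hg] at hgzero
  rw [integral_sub (aux_integrable_sq_exp hb)
      ((integrable_exp_neg_mul_sq hb).const_mul _)] at hgzero
  rw [integral_const_mul, integral_gaussian] at hgzero
  have : ∫ x : ℝ, x ^ 2 * Real.exp (-b * x ^ 2) = (2 * b)⁻¹ * Real.sqrt (π / b) := by
    linarith
  rw [this]; ring


section gauss
variable {v : ℝ≥0}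

noncomputable def gpdf (v : ℝ≥0) : ℝ → ℝ≥0 := fun x => (gaussianPDFReal 0 v x).toNNReal

lemma gpdf_meas (v : ℝ≥0) : Measurable (gpdf v) :=
  (measurable_gaussianPDFReal 0 v).real_toNNReal

lemma gaussianReal_eq_withDensity (hv : v ≠ 0) :
    gaussianReal 0 v = volume.withDensity (fun x => ((gpdf v x : ℝ≥0) : ℝ≥0∞)) := by
  rw [gaussianReal_of_var_ne_zero _ hv]
  rfl

lemma gpdf_smul (r : ℝ) (x : ℝ) : gpdf v x • r = gaussianPDFReal 0 v x * r := by
  simp [gpdf, NNReal.smul_def, Real.coe_toNNReal _ (gaussianPDFReal_nonneg 0 v x)]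

lemma gpdf_eq (hv : v ≠ 0) (x : ℝ) :
    gaussianPDFReal 0 v x = (Real.sqrt (2 * π * v))⁻¹ * Real.exp (-(2*(v:ℝ))⁻¹ * x ^ 2) := by
  have : (v:ℝ) ≠ 0 := by exact_mod_cast hv
  unfold gaussianPDFReal
  rw [sub_zero, Real.exp_eq_exp.mpr (by field_simp : -x^2/(2*(v:ℝ)) = -(2*(v:ℝ))⁻¹ * x^2)]

lemma gaussian_integral_mul (g : ℝ → ℝ) (hv : v ≠ 0) :
    ∫ x, g x ∂(gaussianReal 0 v) = ∫ x, gaussianPDFReal 0 v x * g x := by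
  rw [gaussianReal_eq_withDensity hv, integral_withDensity_eq_integral_smul (gpdf_meas v)]
  simp_rw [gpdf_smul]

lemma gaussian_integrable_mul_iff (g : ℝ → ℝ) (hv : v ≠ 0) :
    Integrable g (gaussianReal 0 v) ↔ Integrable (fun x => gaussianPDFReal 0 v x * g x) := by
  rw [gaussianReal_eq_withDensity hv,
    integrable_withDensity_iff_integrable_smul (gpdf_meas v)]
  simp_rw [gpdf_smul]

lemma gaussian_integral_id (hv : v ≠ 0) : ∫ x, x ∂(gaussianReal 0 v) = 0 := by
  rw [gaussian_integral_mul _ hv]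
  have hodd : ∀ x : ℝ, gaussianPDFReal 0 v (-x) * (-x) = -(gaussianPDFReal 0 v x * x) := by
    intro x
    have : gaussianPDFReal 0 v (-x) = gaussianPDFReal 0 v x := by
      rw [gaussianPDFReal, gaussianPDFReal]; ring_nf
    rw [this]; ring
  have h := integral_neg_eq_self (fun x => gaussianPDFReal 0 v x * x) (volume : Measure ℝ)
  simp_rw [hodd, integral_neg] at h
  linarith
end gauss

lemma gaussian_integral_sq {v : ℝ≥0} (hv : v ≠ 0) :
    ∫ x, x ^ 2 ∂(gaussianReal 0 v) = v := by
  have hvpos : (0:ℝ) < v := by positivity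
  have hb : (0:ℝ) < (2*(v:ℝ))⁻¹ := by positivity
  rw [gaussian_integral_mul _ hv]
  rw [show (fun x:ℝ => gaussianPDFReal 0 v x * x^2)
      = fun x => (Real.sqrt (2*π*(v:ℝ)))⁻¹ * (x^2 * Real.exp (-(2*(v:ℝ))⁻¹ * x^2)) from
    funext fun x => by rw [gpdf_eq hv]; ring]
  rw [integral_const_mul, integral_sq_mul_exp_neg_mul_sq hb]
  have h1 : π / ((2*(v:ℝ))⁻¹) = 2 * π * v := by field_simp
  rw [h1]
  have h2 : Real.sqrt (2*π*(v:ℝ)) ≠ 0 := by positivity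
  field_simp

lemma gaussian_memLp_id {v : ℝ≥0} (hv : v ≠ 0) : MemLp id 2 (gaussianReal 0 v) := by
  have hb : (0:ℝ) < (2*(v:ℝ))⁻¹ := by positivity
  rw [memLp_two_iff_integrable_sq aestronglyMeasurable_id]
  rw [show (fun x : ℝ => id x ^ 2) = fun x : ℝ => x ^ 2 from rfl]
  rw [gaussian_integrable_mul_iff _ hv]
  have heq : (fun x : ℝ => gaussianPDFReal 0 v x * x ^ 2)
      = fun x => (Real.sqrt (2*π*(v:ℝ)))⁻¹ * (x^2 * Real.exp (-(2*(v:ℝ))⁻¹ * x^2)) := by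
    funext x; rw [gpdf_eq hv]; ring
  rw [heq]
  exact (aux_integrable_sq_exp hb).const_mul _

section law
variable {Ω : Type*} [MeasurableSpace Ω] {μ : Measure Ω} [IsProbabilityMeasure μ]
  {X : Ω → ℝ} {v : ℝ≥0}

lemma law_memLp (hX : Measurable X) (hmap : Measure.map X μ = gaussianReal 0 v)
    (hv : v ≠ 0) : MemLp X 2 μ := by
  have h := gaussian_memLp_id hv
  rw [← hmap] at h
  exact (memLp_map_measure_iff aestronglyMeasurable_id hX.aemeasurable).mp h

lemma law_integral (hX : Measurable X) (hmap : Measure.map X μ = gaussianReal 0 v)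
    (hv : v ≠ 0) : ∫ ω, X ω ∂μ = 0 := by
  have h := integral_map (μ := μ) hX.aemeasurable (f := fun x : ℝ => x) aestronglyMeasurable_id
  rw [hmap, gaussian_integral_id hv] at h
  exact h.symm

lemma law_integral_sq (hX : Measurable X) (hmap : Measure.map X μ = gaussianReal 0 v)
    (hv : v ≠ 0) : ∫ ω, X ω ^ 2 ∂μ = v := by
  have h := integral_map (μ := μ) hX.aemeasurable (f := fun x : ℝ => x ^ 2)
    (measurable_id.pow_const 2).aestronglyMeasurable
  rw [hmap, gaussian_integral_sq hv] at h
  exact h.symm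

lemma law_variance (hX : Measurable X) (hmap : Measure.map X μ = gaussianReal 0 v)
    (hv : v ≠ 0) : variance X μ = v := by
  rw [variance_eq_sub (law_memLp hX hmap hv)]
  have h1 : μ[X ^ 2] = ∫ ω, X ω ^ 2 ∂μ := by rfl
  rw [h1, law_integral_sq hX hmap hv, law_integral hX hmap hv]
  ring

end law

lemma expected_sq_offset {Ω : Type*} [MeasurableSpace Ω] {μ : Measure Ω}
    [IsProbabilityMeasure μ] {ι : Type*} [Fintype ι] (c : ℝ) (W : ι → Ω → ℝ)
    (hmem : ∀ i, MemLp (W i) 2 μ)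
    (hindep : Set.Pairwise (Finset.univ : Finset ι) fun i j => IndepFun (W i) (W j) μ)
    (hzero : ∀ i, ∫ ω, W i ω ∂μ = 0) :
    ∫ ω, (c - ∑ i, W i ω) ^ 2 ∂μ = c ^ 2 + ∑ i, variance (W i) μ := by
  set S : Ω → ℝ := ∑ i, W i with hSdef
  have hSapp : ∀ ω, S ω = ∑ i, W i ω := fun ω => by simp [hSdef]
  have hS : MemLp S 2 μ := memLp_finset_sum' _ fun i _ => hmem i
  have hSint : Integrable S μ := hS.integrable one_le_two
  have hSsqint : Integrable (fun ω => S ω ^ 2) μ := hS.integrable_sq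
  have hSmean : ∫ ω, S ω ∂μ = 0 := by
    simp_rw [hSapp]
    rw [integral_finset_sum _ fun i _ => (hmem i).integrable one_le_two]
    simp [hzero]
  have hSvar : variance S μ = ∑ i, variance (W i) μ :=
    IndepFun.variance_sum (fun i _ => hmem i) hindep
  have hSsq : ∫ ω, S ω ^ 2 ∂μ = ∑ i, variance (W i) μ := by
    have h := variance_eq_sub hS
    rw [hSvar] at h
    have h2 : μ[S ^ 2] = ∫ ω, S ω ^ 2 ∂μ := by rfl
    rw [h2, hSmean] at h
    linarith [h]
  have hint : ∀ ω, (c - ∑ i, W i ω) ^ 2 = (c ^ 2 - 2 * c * S ω) + S ω ^ 2 := by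
    intro ω; rw [hSapp]; ring
  simp_rw [hint]
  have h3 := integral_add (μ := μ) (f := fun ω => c ^ 2 - 2 * c * S ω)
    (g := fun ω => S ω ^ 2) ((integrable_const _).sub (hSint.const_mul _)) hSsqint
  have h4 := integral_sub (μ := μ) (f := fun _ : Ω => c ^ 2)
    (g := fun ω => 2 * c * S ω) (integrable_const _) (hSint.const_mul _)
  rw [h3, h4, integral_const, integral_const_mul, hSmean, hSsq]
  simp


/-- Corollary 1: with `σ = σ'` and a data point fit exactly by the noiseless model
(`y = θᵀx`, i.e. `c = 0`), one has `a² − b² = σ² x_m²`, and hence the reduced model has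
expected squared error at most that of the full model iff `|θ_m| ≤ σ`. -/
theorem corollary_gaussian_noise_linear_model
    {Ω : Type*} [MeasurableSpace Ω] (μ : Measure Ω) [IsProbabilityMeasure μ]
    (n : ℕ) (θ x : Fin (n + 1) → ℝ) (y : ℝ) (σ : ℝ≥0) (hσ : 0 < σ)
    (z z' : Fin (n + 1) → Ω → ℝ)
    (hxm : x (Fin.last n) ≠ 0)
    (hzmeas : ∀ i, Measurable (z i)) (hz'meas : ∀ i, Measurable (z' i))
    (hzindep : iIndepFun z μ)
    (hz'indep : iIndepFun z' μ)
    (hzgauss : ∀ i, Measure.map (z i) μ = gaussianReal 0 (σ ^ 2))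
    (hz'gauss : ∀ i, i ≠ Fin.last n → Measure.map (z' i) μ = gaussianReal 0 (σ ^ 2))
    (hz'last : z' (Fin.last n) = fun _ => 0)
    (θ' : Fin (n + 1) → ℝ) (hθ' : θ' = Function.update θ (Fin.last n) 0)
    (x' : Fin (n + 1) → ℝ) (hx' : x' = Function.update x (Fin.last n) 0)
    (hfit : y = ∑ i, θ i * x i)
    (a b : ℝ)
    (ha : a = (σ : ℝ) * Real.sqrt (∑ i, x i ^ 2))
    (hb : b = (σ : ℝ) * Real.sqrt (∑ i, x' i ^ 2)) :
    a ^ 2 - b ^ 2 = (σ : ℝ) ^ 2 * x (Fin.last n) ^ 2 ∧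
    ((∫ ω, (y - ∑ i, (θ' i + z' i ω) * x i) ^ 2 ∂μ
        ≤ ∫ ω, (y - ∑ i, (θ i + z i ω) * x i) ^ 2 ∂μ) ↔
      |θ (Fin.last n)| ≤ (σ : ℝ)) := by
  classical
  set m := Fin.last n with hmdef
  have hv : (σ ^ 2 : ℝ≥0) ≠ 0 := pow_ne_zero 2 hσ.ne'
  have hvr : ((σ ^ 2 : ℝ≥0) : ℝ) = (σ : ℝ) ^ 2 := by push_cast; ring
  set T : ℝ := ∑ i, x i ^ 2 with hTdef
  have hT0 : 0 ≤ T := Finset.sum_nonneg fun i _ => sq_nonneg _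
  have hT'0 : 0 ≤ ∑ i, x' i ^ 2 := Finset.sum_nonneg fun i _ => sq_nonneg _
  have hsum_x' : ∑ i, x' i ^ 2 = T - x m ^ 2 := by
    subst hx'
    have h1 : ∀ i, Function.update x m 0 i ^ 2
        = Function.update (fun k => x k ^ 2) m ((0:ℝ) ^ 2) i := fun i =>
      Function.apply_update (fun k v => v ^ 2) x m 0 i
    simp_rw [h1]
    rw [Finset.sum_update_of_mem (Finset.mem_univ m)]
    have h2 : T = (∑ k ∈ Finset.univ \ {m}, x k ^ 2) + x m ^ 2 :=
      Finset.sum_eq_sum_sdiff_singleton_add (Finset.mem_univ m) _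
    norm_num
    exact hTdef.symm
  have hsum_θ' : ∑ i, θ' i * x i = (∑ i, θ i * x i) - θ m * x m := by
    subst hθ'
    have h1 : ∀ i, Function.update θ m 0 i * x i
        = Function.update (fun k => θ k * x k) m ((0:ℝ) * x m) i := fun i =>
      Function.apply_update (fun k v => v * x k) θ m 0 i
    simp_rw [h1]
    rw [Finset.sum_update_of_mem (Finset.mem_univ m)]
    have h2 : ∑ i, θ i * x i = (∑ k ∈ Finset.univ \ {m}, θ k * x k) + θ m * x m :=
      Finset.sum_eq_sum_sdiff_singleton_add (Finset.mem_univ m) _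
    norm_num
  have hxm2 : 0 < x m ^ 2 := by positivity
  constructor
  · rw [ha, hb, mul_pow, mul_pow, Real.sq_sqrt hT0, Real.sq_sqrt hT'0, hsum_x']
    ring
  -- the probabilistic part
  have hzmem : ∀ i, MemLp (z i) 2 μ := fun i => law_memLp (hzmeas i) (hzgauss i) hv
  -- full model
  have hWmem : ∀ i : Fin (n + 1), MemLp (fun ω => x i * z i ω) 2 μ :=
    fun i => (hzmem i).const_mul (x i)
  have hWzero : ∀ i : Fin (n + 1), ∫ ω, x i * z i ω ∂μ = 0 := by
    intro i
    rw [integral_const_mul, law_integral (hzmeas i) (hzgauss i) hv, mul_zero]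
  have hWindep : Set.Pairwise (Finset.univ : Finset (Fin (n + 1)))
      fun i j => IndepFun (fun ω => x i * z i ω) (fun ω => x j * z j ω) μ := by
    intro i _ j _ hij
    exact (hzindep.indepFun hij).comp (measurable_const_mul (x i))
      (measurable_const_mul (x j))
  have hRHS : ∫ ω, (y - ∑ i, (θ i + z i ω) * x i) ^ 2 ∂μ = (σ : ℝ) ^ 2 * T := by
    have heq : (fun ω => (y - ∑ i, (θ i + z i ω) * x i) ^ 2)
        = fun ω => ((0 : ℝ) - ∑ i, (fun i (ω : Ω) => x i * z i ω) i ω) ^ 2 := by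
      funext ω
      have hs : ∑ i, (θ i + z i ω) * x i = (∑ i, θ i * x i) + ∑ i, x i * z i ω := by
        rw [← Finset.sum_add_distrib]
        exact Finset.sum_congr rfl fun i _ => by ring
      simp only [hs, hfit]
      ring
    rw [heq, expected_sq_offset 0 _ hWmem hWindep hWzero]
    have hvar : ∀ i : Fin (n + 1),
        variance (fun ω => x i * z i ω) μ = x i ^ 2 * (σ : ℝ) ^ 2 := by
      intro i
      rw [variance_const_mul, law_variance (hzmeas i) (hzgauss i) hv, hvr]
    simp_rw [hvar]
    rw [← Finset.sum_mul]
    ring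
  -- reduced model
  have hW'mem : ∀ i : Fin (n + 1), MemLp (fun ω => x i * z' i ω) 2 μ := by
    intro i
    by_cases h : i = m
    · subst h
      simp only [hz'last, mul_zero]
      exact memLp_const 0
    · exact (law_memLp (hz'meas i) (hz'gauss i h) hv).const_mul (x i)
  have hW'zero : ∀ i : Fin (n + 1), ∫ ω, x i * z' i ω ∂μ = 0 := by
    intro i
    by_cases h : i = m
    · subst h
      simp only [hz'last, mul_zero, integral_zero]
    · rw [integral_const_mul, law_integral (hz'meas i) (hz'gauss i h) hv, mul_zero]
  have hW'indep : Set.Pairwise (Finset.univ : Finset (Fin (n + 1)))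
      fun i j => IndepFun (fun ω => x i * z' i ω) (fun ω => x j * z' j ω) μ := by
    intro i _ j _ hij
    exact (hz'indep.indepFun hij).comp (measurable_const_mul (x i))
      (measurable_const_mul (x j))
  have hW'var : ∀ i : Fin (n + 1),
      variance (fun ω => x i * z' i ω) μ = x' i ^ 2 * (σ : ℝ) ^ 2 := by
    intro i
    by_cases h : i = m
    · subst h
      have h0 : (fun ω : Ω => x m * z' m ω) = (0 : Ω → ℝ) := by
        rw [hz'last]; funext ω; simp
      rw [h0, variance_zero, hx']
      simp
    · rw [variance_const_mul, law_variance (hz'meas i) (hz'gauss i h) hv, hvr, hx',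
        Function.update_of_ne h]
  have hLHS : ∫ ω, (y - ∑ i, (θ' i + z' i ω) * x i) ^ 2 ∂μ
      = (θ m * x m) ^ 2 + (σ : ℝ) ^ 2 * (T - x m ^ 2) := by
    have heq : (fun ω => (y - ∑ i, (θ' i + z' i ω) * x i) ^ 2)
        = fun ω => (θ m * x m - ∑ i, (fun i (ω : Ω) => x i * z' i ω) i ω) ^ 2 := by
      funext ω
      have hs : ∑ i, (θ' i + z' i ω) * x i = (∑ i, θ' i * x i) + ∑ i, x i * z' i ω := by
        rw [← Finset.sum_add_distrib]
        exact Finset.sum_congr rfl fun i _ => by ring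
      simp only [hs, hsum_θ', hfit]
      ring
    rw [heq, expected_sq_offset (θ m * x m) _ hW'mem hW'indep hW'zero]
    simp_rw [hW'var]
    rw [← Finset.sum_mul, hsum_x']
    ring
  rw [hLHS, hRHS]
  have key : |θ m| ≤ (σ : ℝ) ↔ θ m ^ 2 ≤ (σ : ℝ) ^ 2 := by
    rw [← sq_abs]
    exact (pow_le_pow_iff_left₀ (abs_nonneg _) σ.coe_nonneg two_ne_zero).symm
  rw [key]
  constructor
  · intro h
    nlinarith [hxm2]
  · intro h
    nlinarith [hxm2, sq_nonneg (x m)]
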